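/- Let 𝒱 be a variety of groups defined by a set of words V. Then 𝒱 is a Schur-Baer variety if and only if for every finite group G, the Baer invariant 𝒱M(G) is finite of order dividing a power of |G|. -/

import Mathlib

/-! Common framework: varieties of groups, verbal and marginal subgroups,
word values, the `B̃₀`-invariant of a group with respect to a variety. -/

universe u v

/-- The set `T(G)` of values in `G` of the words in `V`. -/
def wordValues (V : Set (FreeGroup ℕ)) (G : Type*) [Group G] : Set G :=
  {g | ∃ v ∈ V, ∃ f : ℕ → G, FreeGroup.lift f v = g}

/-- The verbal subgroup `V(G)`, generated by all values in `G` of words of `V`. -/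
def verbal (V : Set (FreeGroup ℕ)) (G : Type*) [Group G] : Subgroup G :=
  Subgroup.closure (wordValues V G)

/-- The verbal subgroup `V(B)` of a subgroup `B` of `G`, viewed as a subgroup of `G`:
it is generated by all values of words of `V` at tuples of elements of `B`. -/
def verbalOn (V : Set (FreeGroup ℕ)) {G : Type*} [Group G] (B : Subgroup G) : Subgroup G :=
  Subgroup.closure {g | ∃ v ∈ V, ∃ f : ℕ → G, (∀ n, f n ∈ B) ∧ FreeGroup.lift f v = g}

/-- The marginal subgroup `V*(G)`: those `a` such that replacing any entry `gᵢ` of any tuple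
by `gᵢ * a` does not change the value of any word of `V`. -/
def marginal (V : Set (FreeGroup ℕ)) (G : Type*) [Group G] : Subgroup G where
  carrier := {a | ∀ v ∈ V, ∀ f : ℕ → G, ∀ i : ℕ,
    FreeGroup.lift (Function.update f i (f i * a)) v = FreeGroup.lift f v}
  one_mem' := by
    intro v hv f i
    rw [mul_one, Function.update_eq_self]
  mul_mem' := by
    intro a b ha hb v hv f i
    have h1 := hb v hv (Function.update f i (f i * a)) i
    rw [Function.update_self, Function.update_idem] at h1
    rw [← mul_assoc]
    exact h1.trans (ha v hv f i)
  inv_mem' := by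
    intro a ha v hv f i
    have h1 := ha v hv (Function.update f i (f i * a⁻¹)) i
    rw [Function.update_self, Function.update_idem, inv_mul_cancel_right,
      Function.update_eq_self] at h1
    exact h1.symm

lemma FreeGroup.lift_conj {α : Type*} {G : Type*} [Group G] (f : α → G) (c : G)
    (w : FreeGroup α) :
    FreeGroup.lift (fun n => c * f n * c⁻¹) w = c * FreeGroup.lift f w * c⁻¹ := by
  have h : (FreeGroup.lift (fun n => c * f n * c⁻¹) : FreeGroup α →* G)
      = ((MulAut.conj c).toMonoidHom.comp (FreeGroup.lift f)) := by
    apply FreeGroup.ext_hom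
    intro a
    simp
  rw [h]
  simp

lemma Subgroup.closure_normal_of_conj {G : Type*} [Group G] {S : Set G}
    (hS : ∀ c : G, ∀ g ∈ S, c * g * c⁻¹ ∈ S) : (Subgroup.closure S).Normal := by
  constructor
  intro x hx c
  induction hx using Subgroup.closure_induction with
  | mem g hg => exact Subgroup.subset_closure (hS c g hg)
  | one => simpa using (Subgroup.closure S).one_mem
  | mul a b _ _ pa pb =>
      have h : c * (a * b) * c⁻¹ = (c * a * c⁻¹) * (c * b * c⁻¹) := by group
      rw [h]; exact mul_mem pa pb
  | inv a _ pa =>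
      have h : c * a⁻¹ * c⁻¹ = (c * a * c⁻¹)⁻¹ := by group
      rw [h]; exact inv_mem pa

lemma wordValues_conj_mem {V : Set (FreeGroup ℕ)} {G : Type*} [Group G]
    (c : G) {g : G} (hg : g ∈ wordValues V G) : c * g * c⁻¹ ∈ wordValues V G := by
  obtain ⟨v, hv, f, rfl⟩ := hg
  exact ⟨v, hv, fun n => c * f n * c⁻¹, FreeGroup.lift_conj f c v⟩

/-- The canonical free presentation `1 → R → F → G → 1` of `G`, with
`F = FreeGroup G` the free group on the underlying set of `G`. -/
def presHom (G : Type*) [Group G] : FreeGroup G →* G := FreeGroup.lift id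

/-- The relation subgroup `R` of the canonical free presentation of `G`. -/
def presKer (G : Type*) [Group G] : Subgroup (FreeGroup G) := (presHom G).ker

/-- The numerator `R ∩ V(F)` of the `B̃₀`-invariant. -/
def vB0Num (V : Set (FreeGroup ℕ)) (G : Type*) [Group G] : Subgroup (FreeGroup G) :=
  presKer G ⊓ verbal V (FreeGroup G)

/-- The denominator `⟨T(F) ∩ R⟩` of the `B̃₀`-invariant. -/
def vB0Den (V : Set (FreeGroup ℕ)) (G : Type*) [Group G] : Subgroup (FreeGroup G) :=
  Subgroup.closure (wordValues V (FreeGroup G) ∩ (presKer G : Set (FreeGroup G)))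

lemma vB0Den_normal (V : Set (FreeGroup ℕ)) (G : Type*) [Group G] : (vB0Den V G).Normal := by
  apply Subgroup.closure_normal_of_conj
  rintro c g ⟨hg1, hg2⟩
  exact ⟨wordValues_conj_mem c hg1, (presHom G).normal_ker.conj_mem g hg2 c⟩

instance vB0DenSubgroupOf_normal (V : Set (FreeGroup ℕ)) (G : Type*) [Group G] :
    ((vB0Den V G).subgroupOf (vB0Num V G)).Normal :=
  (vB0Den_normal V G).subgroupOf _

/-- The `B̃₀`-invariant `𝒱B̃₀(G) = (R ∩ V(F)) / ⟨T(F) ∩ R⟩` of `G` with respect to the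
variety defined by the set of words `V`, computed from the canonical free presentation. -/
def vB0 (V : Set (FreeGroup ℕ)) (G : Type*) [Group G] : Type _ :=
  ↥(vB0Num V G) ⧸ (vB0Den V G).subgroupOf (vB0Num V G)

instance (V : Set (FreeGroup ℕ)) (G : Type*) [Group G] : Group (vB0 V G) :=
  inferInstanceAs (Group (↥(vB0Num V G) ⧸ (vB0Den V G).subgroupOf (vB0Num V G)))

/-- A variety defined by a set of words `V` is a Schur-Baer variety if, for every group `G`
whose marginal factor `G/V*(G)` is finite (of order `m = [G : V*(G)]`), the verbal subgroup
`V(G)` is finite of order dividing a power of `m`. -/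
def IsSchurBaer (V : Set (FreeGroup ℕ)) : Prop :=
  ∀ (G : Type u) [Group G], (marginal V G).FiniteIndex →
    Finite (verbal V G) ∧ ∃ k : ℕ, Nat.card (verbal V G) ∣ (marginal V G).index ^ k

open scoped commutatorElement

/-- Outer commutator words: `IsOCWord a b w` means that `w` is an outer commutator word
in the (distinct) variables `x_a, x_{a+1}, …, x_{b-1}` (so of weight `b - a`).
`IsOCWord 0 r w` means `w = w(x₁,…,x_r)` is an outer commutator word of weight `r`. -/
inductive IsOCWord : ℕ → ℕ → FreeGroup ℕ → Prop
  | var (i : ℕ) : IsOCWord i (i + 1) (FreeGroup.of i)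
  | comm {a b c : ℕ} {u v : FreeGroup ℕ} :
      IsOCWord a b u → IsOCWord b c v → IsOCWord a c ⁅u, v⁆

/-- Given an outer commutator word `w = w(x₁,…,x_r)` (in variables `x_0,…,x_{r-1}`),
the set of laws `{[w(x₁,…,x_r), x_{r+1}, x_{r+2}]}` defining the
center-by-center-by-`w` variety. -/
def ocVariety (w : FreeGroup ℕ) (r : ℕ) : Set (FreeGroup ℕ) :=
  {⁅⁅w, FreeGroup.of r⁆, FreeGroup.of (r + 1)⁆}

/-- The lifting condition of a VP extension: any trivial word (a value of a word of `V`
which equals `1`) of elements of the quotient has a trivial lift. -/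
def HasVPLifts (V : Set (FreeGroup ℕ)) {G Q : Type*} [Group G] [Group Q] (π : G →* Q) : Prop :=
  ∀ v ∈ V, ∀ q : ℕ → Q, FreeGroup.lift q v = 1 →
    ∃ g : ℕ → G, (∀ i, π (g i) = q i) ∧ FreeGroup.lift g v = 1

/-- `1 → L → G* → Q → 1` is a VP cover of `Q` (with respect to the variety defined by `V`):
a `𝒱`-stem marginal VP extension with `L ≅ 𝒱B̃₀(Q)`. Here `L` is realized as a subgroup
of `G*` and `π : G* → Q` is the projection. -/
structure IsVPCover (V : Set (FreeGroup ℕ)) {Gs : Type*} {Q : Type*} [Group Gs] [Group Q]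
    (L : Subgroup Gs) (π : Gs →* Q) : Prop where
  surj : Function.Surjective π
  ker_eq : π.ker = L
  marginal_le : L ≤ marginal V Gs
  stem : L ≤ verbal V Gs
  lifts : HasVPLifts V π
  iso : Nonempty (L ≃* vB0 V Q)

/-- The single commutator word `[x₁, x₂]` defining the variety of abelian groups. -/
def commutatorWord : Set (FreeGroup ℕ) := {⁅FreeGroup.of 0, FreeGroup.of 1⁆}

/-- The Bogomolov multiplier `B̃₀(G) = (R ∩ [F,F]) / ⟨K(F) ∩ R⟩`: the `B̃₀`-invariant with
respect to the variety of abelian groups (then the verbal subgroup of the free group `F` is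
its derived subgroup `[F,F]` and the set of word values is the set `K(F)` of commutators). -/
def B0tilde (G : Type*) [Group G] : Type _ := vB0 commutatorWord G

instance (G : Type*) [Group G] : Group (B0tilde G) := inferInstanceAs (Group (vB0 commutatorWord G))

/-- The set of generators of `[R V* F]`:
all `v(f₁,…,fᵢr,…,f_s) · v(f₁,…,f_s)⁻¹` with `v ∈ V`, `fⱼ ∈ F`, `r ∈ R`. -/
def margCommSet (V : Set (FreeGroup ℕ)) {F : Type*} [Group F] (R : Subgroup F) : Set F :=
  {x | ∃ v ∈ V, ∃ f : ℕ → F, ∃ i : ℕ, ∃ r ∈ R,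
    FreeGroup.lift (Function.update f i (f i * r)) v * (FreeGroup.lift f v)⁻¹ = x}

/-- The subgroup `[R V* F]` for the canonical free presentation of `G`. -/
def vMDen (V : Set (FreeGroup ℕ)) (G : Type*) [Group G] : Subgroup (FreeGroup G) :=
  Subgroup.closure (margCommSet V (presKer G))

lemma vMDen_normal (V : Set (FreeGroup ℕ)) (G : Type*) [Group G] : (vMDen V G).Normal := by
  apply Subgroup.closure_normal_of_conj
  rintro c g ⟨v, hv, f, i, r, hr, rfl⟩
  refine ⟨v, hv, fun n => c * f n * c⁻¹, i, c * r * c⁻¹,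
    (presHom G).normal_ker.conj_mem r hr c, ?_⟩
  have h1 : Function.update (fun n => c * f n * c⁻¹) i
      ((fun n => c * f n * c⁻¹) i * (c * r * c⁻¹))
      = fun n => c * (Function.update f i (f i * r)) n * c⁻¹ := by
    have h2 : (fun n => c * (Function.update f i (f i * r)) n * c⁻¹)
        = (fun y => c * y * c⁻¹) ∘ (Function.update f i (f i * r)) := rfl
    rw [h2, Function.comp_update]
    have h3 : (fun y => c * y * c⁻¹) ∘ f = fun n => c * f n * c⁻¹ := rfl
    rw [h3]
    group
  rw [h1, FreeGroup.lift_conj, FreeGroup.lift_conj]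
  group

instance vMDenSubgroupOf_normal (V : Set (FreeGroup ℕ)) (G : Type*) [Group G] :
    ((vMDen V G).subgroupOf (vB0Num V G)).Normal :=
  (vMDen_normal V G).subgroupOf _

/-- The Baer invariant `𝒱M(G) = (R ∩ V(F)) / [R V* F]` of `G` with respect to the variety
defined by `V`, computed from the canonical free presentation. -/
def vM (V : Set (FreeGroup ℕ)) (G : Type*) [Group G] : Type _ :=
  ↥(vB0Num V G) ⧸ (vMDen V G).subgroupOf (vB0Num V G)

instance (V : Set (FreeGroup ℕ)) (G : Type*) [Group G] : Group (vM V G) :=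
  inferInstanceAs (Group (↥(vB0Num V G) ⧸ (vMDen V G).subgroupOf (vB0Num V G)))

/-! For a free presentation `G = F/R` with `G` finite, `R/[R V* F]` is marginal in
`F/[R V* F]` with quotient `G`, and `𝒱M(G)` embeds in the verbal subgroup of `F/[R V* F]`;
so the Schur-Baer property bounds `|𝒱M(G)|`. Conversely, if `Q = G/V*(G)` is finite, mapping
the free generators of `Q` to a transversal of `V*(G)` sends the free presentation of `Q`
into `G`, with `R` landing in `V*(G)`; this maps `𝒱M(Q)` onto `V(G) ∩ V*(G)`, while
`V(G)/(V(G) ∩ V*(G))` embeds in `Q`, so `|V(G)|` divides `|Q| · |𝒱M(Q)|`. -/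

theorem FreeGroup.hom_map_lift {α G H : Type*} [Group G] [Group H] (φ : G →* H) (f : α → G)
    (w : FreeGroup α) : φ (FreeGroup.lift f w) = FreeGroup.lift (φ ∘ f) w := by
  change (φ.comp (FreeGroup.lift f)) w = _
  congr 1
  ext
  simp

theorem FreeGroup.exists_lift_eq_of_forall_lt_eq {G : Type*} [Group G] (w : FreeGroup ℕ) :
    ∃ N, ∀ f g : ℕ → G, (∀ n < N, f n = g n) → FreeGroup.lift f w = FreeGroup.lift g w := by
  induction w with
  | C1 => exact ⟨0, fun _ _ _ => by simp only [_root_.map_one]⟩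
  | of i => exact ⟨i + 1, fun f g h => by simpa using h i i.lt_succ_self⟩
  | inv_of i ih =>
    obtain ⟨N, hN⟩ := ih
    exact ⟨N, fun f g h => by rw [_root_.map_inv, _root_.map_inv, hN f g h]⟩
  | mul x y ihx ihy =>
    obtain ⟨M, hM⟩ := ihx
    obtain ⟨N, hN⟩ := ihy
    refine ⟨max M N, fun f g h => ?_⟩
    rw [_root_.map_mul, _root_.map_mul, hM f g fun n hn => h n (lt_max_of_lt_left hn),
      hN f g fun n hn => h n (lt_max_of_lt_right hn)]

theorem Subgroup.card_subgroupOf {G : Type*} [Group G] (H K : Subgroup G) :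
    Nat.card (H.subgroupOf K) = Nat.card ↥(H ⊓ K) := by
  rw [← Subgroup.subgroupOf_map_subtype, Subgroup.card_map_of_injective K.subtype_injective]

section Marginal

variable {V : Set (FreeGroup ℕ)} {G H : Type*} [Group G] [Group H]

theorem map_lift_update_mul (φ : G →* H) (f : ℕ → G) (i : ℕ) (a : G) (w : FreeGroup ℕ) :
    φ (FreeGroup.lift (Function.update f i (f i * a)) w)
      = FreeGroup.lift (Function.update (φ ∘ f) i (φ (f i) * φ a)) w := by
  rw [FreeGroup.hom_map_lift, Function.comp_update, map_mul]

theorem map_lift_update_mul_eq_of_map_mem_marginal {φ : G →* H} {a : G}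
    (ha : φ a ∈ marginal V H) {v : FreeGroup ℕ} (hv : v ∈ V) (f : ℕ → G) (i : ℕ) :
    φ (FreeGroup.lift (Function.update f i (f i * a)) v) = φ (FreeGroup.lift f v) := by
  rw [map_lift_update_mul, FreeGroup.hom_map_lift]
  exact ha v hv (φ ∘ f) i

theorem map_mem_marginal_of_forall {φ : G →* H} (hφ : Function.Surjective φ) {a : G}
    (h : ∀ v ∈ V, ∀ (f : ℕ → G) (i : ℕ),
      φ (FreeGroup.lift (Function.update f i (f i * a)) v) = φ (FreeGroup.lift f v)) :
    φ a ∈ marginal V H := by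
  intro v hv f' i
  obtain ⟨f, rfl⟩ : ∃ f, φ ∘ f = f' := hφ.comp_left f'
  exact (map_lift_update_mul φ f i a v).symm.trans
    ((h v hv f i).trans (FreeGroup.hom_map_lift φ f v))

instance marginal_normal : (marginal V G).Normal where
  conj_mem _ ha c :=
    map_mem_marginal_of_forall (φ := (MulAut.conj c).toMonoidHom) (MulAut.conj c).surjective
      fun v hv f i => congrArg _ (ha v hv f i)

theorem lift_mul_marginal {v : FreeGroup ℕ} (hv : v ∈ V) (f a : ℕ → G)
    (ha : ∀ n, a n ∈ marginal V G) :
    FreeGroup.lift (fun n => f n * a n) v = FreeGroup.lift f v := by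
  -- `v` involves only finitely many variables, so changing the entries one at a time suffices.
  have hprefix : ∀ k, FreeGroup.lift (fun n => if n < k then f n * a n else f n) v
      = FreeGroup.lift f v := by
    intro k
    induction k with
    | zero => simp
    | succ k ih =>
      set g : ℕ → G := fun n => if n < k then f n * a n else f n
      have hg : (fun n => if n < k + 1 then f n * a n else f n)
          = Function.update g k (g k * a k) := by
        funext n
        simp only [g, Function.update_apply]
        split_ifs <;> subst_vars <;> first | rfl | omega
      rw [hg, ha k v hv g k, ih]
  obtain ⟨N, hN⟩ := FreeGroup.exists_lift_eq_of_forall_lt_eq (G := G) v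
  rw [← hprefix N]
  exact hN _ _ fun n hn => by simp only [hn, if_true]

theorem margCommSet_subset_ker_of_map_le_marginal {R : Subgroup G} {φ : G →* H}
    (h : R.map φ ≤ marginal V H) : margCommSet V R ⊆ φ.ker := by
  rintro _ ⟨v, hv, f, i, r, hr, rfl⟩
  rw [SetLike.mem_coe, MonoidHom.mem_ker, map_mul, map_inv, mul_inv_eq_one]
  exact map_lift_update_mul_eq_of_map_mem_marginal (h ⟨r, hr, rfl⟩) hv f i

theorem map_le_marginal_of_margCommSet_subset_ker {R : Subgroup G} {φ : G →* H}
    (hφ : Function.Surjective φ) (h : margCommSet V R ⊆ φ.ker) : R.map φ ≤ marginal V H := by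
  rintro _ ⟨r, hr, rfl⟩
  refine map_mem_marginal_of_forall hφ fun v hv f i => ?_
  have hker := h ⟨v, hv, f, i, r, hr, rfl⟩
  rwa [SetLike.mem_coe, MonoidHom.mem_ker, map_mul, map_inv, mul_inv_eq_one] at hker

theorem map_verbal_le (φ : G →* H) : (verbal V G).map φ ≤ verbal V H := by
  rw [verbal, MonoidHom.map_closure]
  apply Subgroup.closure_mono
  rintro _ ⟨_, ⟨v, hv, f, rfl⟩, rfl⟩
  exact ⟨v, hv, φ ∘ f, (FreeGroup.hom_map_lift φ f v).symm⟩

theorem verbal_le_map_verbal {φ : H →* G} (hφ : ∀ g, ∃ h, (φ h)⁻¹ * g ∈ marginal V G) :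
    verbal V G ≤ (verbal V H).map φ := by
  rw [verbal, Subgroup.closure_le]
  rintro _ ⟨v, hv, f, rfl⟩
  choose h hh using fun n => hφ (f n)
  have hvalue : FreeGroup.lift f v = FreeGroup.lift (φ ∘ h) v := by
    simpa only [Function.comp_apply, mul_inv_cancel_left] using
      lift_mul_marginal hv (φ ∘ h) _ hh
  rw [hvalue, ← FreeGroup.hom_map_lift]
  exact ⟨_, Subgroup.subset_closure ⟨v, hv, h, rfl⟩, rfl⟩

end Marginal

section BaerInvariant

variable {V : Set (FreeGroup ℕ)}

attribute [local instance] vMDen_normal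

theorem card_vM_eq_relIndex (G : Type*) [Group G] :
    Nat.card (vM V G) = (vMDen V G).relIndex (vB0Num V G) :=
  rfl

theorem presHom_surjective (G : Type*) [Group G] : Function.Surjective (presHom G) :=
  fun g => ⟨FreeGroup.of g, FreeGroup.lift_apply_of⟩

theorem vMDen_le_presKer (G : Type*) [Group G] : vMDen V G ≤ presKer G := by
  refine (Subgroup.closure_le _).2 (margCommSet_subset_ker_of_map_le_marginal ?_)
  rintro _ ⟨r, hr, rfl⟩
  exact (show presHom G r = 1 from hr) ▸ one_mem _

theorem index_marginal_quotient_vMDen_dvd (G : Type*) [Group G] :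
    (marginal V (FreeGroup G ⧸ vMDen V G)).index ∣ Nat.card G := by
  let φ := QuotientGroup.lift (vMDen V G) (presHom G) (vMDen_le_presKer G)
  have hφ : Function.Surjective φ :=
    QuotientGroup.lift_surjective_of_surjective _ _ (presHom_surjective G) _
  have hker : φ.ker ≤ marginal V (FreeGroup G ⧸ vMDen V G) := by
    rw [show φ.ker = (presHom G).ker.map (QuotientGroup.mk' _) from QuotientGroup.ker_lift _ _ _]
    refine map_le_marginal_of_margCommSet_subset_ker (QuotientGroup.mk'_surjective _) ?_
    rw [QuotientGroup.ker_mk']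
    exact Subgroup.subset_closure
  calc (marginal V (FreeGroup G ⧸ vMDen V G)).index ∣ φ.ker.index := Subgroup.index_dvd_of_le hker
    _ = Nat.card G := by rw [Subgroup.index_ker, MonoidHom.range_eq_top.2 hφ, Subgroup.card_top]

theorem card_vM_dvd_card_verbal_quotient (G : Type*) [Group G] :
    Nat.card (vM V G) ∣ Nat.card (verbal V (FreeGroup G ⧸ vMDen V G)) := by
  have hcard := Subgroup.relIndex_ker (vB0Num V G) (QuotientGroup.mk' (vMDen V G))
  rw [QuotientGroup.ker_mk'] at hcard
  rw [card_vM_eq_relIndex, hcard]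
  exact Subgroup.card_dvd_of_le ((Subgroup.map_mono inf_le_right).trans (map_verbal_le _))

theorem card_marginal_inf_verbal_dvd_card_vM (G : Type*) [Group G] :
    Nat.card ↥(marginal V G ⊓ verbal V G) ∣ Nat.card (vM V (G ⧸ marginal V G)) := by
  set Q := G ⧸ marginal V G
  let ρ : FreeGroup Q →* G := FreeGroup.lift fun q => q.out
  have hρ : ∀ x, ρ x ∈ marginal V G ↔ x ∈ presKer Q := by
    have hcomp : (QuotientGroup.mk' (marginal V G)).comp ρ = presHom Q :=
      FreeGroup.ext_hom _ _ fun q => by simp [ρ, presHom]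
    intro x
    rw [← QuotientGroup.eq_one_iff, presKer, MonoidHom.mem_ker, ← hcomp]
    rfl
  have hden : vMDen V Q ≤ ρ.ker := by
    refine (Subgroup.closure_le _).2 (margCommSet_subset_ker_of_map_le_marginal ?_)
    rintro _ ⟨x, hx, rfl⟩
    exact (hρ x).2 hx
  have htransversal : ∀ g, ∃ x, (ρ x)⁻¹ * g ∈ marginal V G := by
    intro g
    obtain ⟨a, ha⟩ := QuotientGroup.mk_out_eq_mul (marginal V G) g
    refine ⟨FreeGroup.of (g : Q), ?_⟩
    simp only [ρ, FreeGroup.lift_apply_of, ha, mul_inv_rev, inv_mul_cancel_right, inv_mem_iff]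
    exact a.2
  have himage : marginal V G ⊓ verbal V G ≤ (vB0Num V Q).map ρ := by
    rintro g ⟨hgM, hgV⟩
    obtain ⟨x, hx, rfl⟩ := verbal_le_map_verbal htransversal hgV
    exact ⟨x, ⟨(hρ x).1 hgM, hx⟩, rfl⟩
  calc Nat.card ↥(marginal V G ⊓ verbal V G) ∣ Nat.card ((vB0Num V Q).map ρ) :=
        Subgroup.card_dvd_of_le himage
    _ = ρ.ker.relIndex (vB0Num V Q) := (Subgroup.relIndex_ker _ ρ).symm
    _ ∣ Nat.card (vM V Q) := Subgroup.relIndex_dvd_of_le_left _ hden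

theorem card_verbal_dvd_index_mul_card_vM (G : Type*) [Group G] :
    Nat.card (verbal V G) ∣ (marginal V G).index * Nat.card (vM V (G ⧸ marginal V G)) := by
  rw [← ((marginal V G).subgroupOf (verbal V G)).card_mul_index, mul_comm,
    Subgroup.card_subgroupOf]
  exact mul_dvd_mul (Subgroup.relIndex_dvd_index_of_normal _ _)
    (card_marginal_inf_verbal_dvd_card_vM G)

theorem card_vM_dvd_pow_of_isSchurBaer (hV : IsSchurBaer.{u} V) (G : Type u) [Group G]
    [Finite G] : ∃ k, Nat.card (vM V G) ∣ Nat.card G ^ k := by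
  have hindex := index_marginal_quotient_vMDen_dvd (V := V) G
  have : (marginal V (FreeGroup G ⧸ vMDen V G)).FiniteIndex :=
    ⟨fun h => Nat.card_pos.ne' (zero_dvd_iff.1 (h ▸ hindex))⟩
  obtain ⟨-, k, hk⟩ := hV (FreeGroup G ⧸ vMDen V G) this
  exact ⟨k, (card_vM_dvd_card_verbal_quotient G).trans (hk.trans (pow_dvd_pow_of_dvd hindex k))⟩

theorem isSchurBaer_of_card_vM_dvd_pow
    (h : ∀ (G : Type u) [Group G] [Finite G], ∃ k, Nat.card (vM V G) ∣ Nat.card G ^ k) :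
    IsSchurBaer.{u} V := by
  intro G _ hG
  have : Finite (G ⧸ marginal V G) := Subgroup.finite_quotient_of_finiteIndex
  obtain ⟨k, hk⟩ := h (G ⧸ marginal V G)
  have hdvd : Nat.card (verbal V G) ∣ (marginal V G).index ^ (k + 1) := by
    rw [pow_succ']
    exact (card_verbal_dvd_index_mul_card_vM G).trans (mul_dvd_mul_left _ hk)
  exact ⟨Nat.finite_of_card_ne_zero (ne_zero_of_dvd_ne_zero (pow_ne_zero _ hG.index_ne_zero) hdvd),
    _, hdvd⟩

end BaerInvariant

/-- Theorem 1.17 of [9]. A variety `𝒱` defined by a set of words `V` is a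
Schur-Baer variety if and only if for every finite group `G` the Baer invariant `𝒱M(G)` is
finite of order dividing a power of `|G|`. -/
theorem stmt13 (V : Set (FreeGroup ℕ)) :
    IsSchurBaer.{u} V ↔
      ∀ (G : Type u) [Group G], Finite G →
        Finite (vM V G) ∧ ∃ k : ℕ, Nat.card (vM V G) ∣ Nat.card G ^ k := by
  refine ⟨fun hV G _ _ => ?_, fun h => isSchurBaer_of_card_vM_dvd_pow fun G _ hG => (h G hG).2⟩
  obtain ⟨k, hk⟩ := card_vM_dvd_pow_of_isSchurBaer hV G
  exact ⟨Nat.finite_of_card_ne_zero (ne_zero_of_dvd_ne_zero (pow_ne_zero k Nat.card_pos.ne') hk),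
    k, hk⟩
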